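/- arXiv:2602.08026 — 3 statements merged into one kernel-verified Lean document; each statement's English description precedes it below -/
import Mathlib

section
/- (ES actions stay in the span of the initialisation.) Run linear ensemble sampling on the action set X = B^d with any initial vectors ζ^1,…,ζ^m ∈ ℝ^d and any parameters γ̄, λ > 0, using the tie-breaking rule X_t = θ_t/‖θ_t‖ if θ_t ≠ 0 and X_t = 0 if θ_t = 0. Let U = span{ζ^1,…,ζ^m}. Then for every t ≥ 1, X_t ∈ U almost surely. -/
open MeasureTheory ProbabilityTheory Matrix

noncomputable section

/-- Euclidean norm of a vector in `Fin d → ℝ`. -/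
def euclNorm {d : ℕ} (x : Fin d → ℝ) : ℝ := Real.sqrt (x ⬝ᵥ x)

/-- Weighted norm `‖x‖_A = √(xᵀ A x)`. -/
def wnorm {d : ℕ} (A : Matrix (Fin d) (Fin d) ℝ) (x : Fin d → ℝ) : ℝ :=
  Real.sqrt (x ⬝ᵥ A.mulVec x)

/-- The standard Gaussian measure on `Fin d → ℝ` (i.i.d. `N(0,1)` coordinates). -/
def stdGaussianVec (d : ℕ) : Measure (Fin d → ℝ) := Measure.pi fun _ => gaussianReal 0 1

/-- Data of a run of linear ensemble sampling: the underlying probability space, the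
parameters, and all the stochastic processes involved. -/
structure ESData (Ω : Type) [MeasurableSpace Ω] (d m : ℕ) where
  /-- the underlying probability measure -/
  P : Measure Ω
  /-- regularisation parameter λ -/
  lam : ℝ
  /-- inflation parameter γ̄ -/
  gam : ℝ
  /-- confidence parameter δ (used in the radius β) -/
  del : ℝ
  /-- the action set -/
  Xset : Set (Fin d → ℝ)
  /-- the unknown parameter θ⋆ -/
  thetaStar : Fin d → ℝ
  /-- prior perturbations ζ¹,…,ζᵐ -/
  zeta : Fin m → Ω → (Fin d → ℝ)
  /-- reward perturbations ξ_t^j, t ≥ 1 -/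
  xi : ℕ → Fin m → Ω → ℝ
  /-- uniformly chosen indices J_t, t ≥ 1 -/
  J : ℕ → Ω → Fin m
  /-- actions X_t, t ≥ 1 -/
  act : ℕ → Ω → (Fin d → ℝ)
  /-- rewards Y_t, t ≥ 1 -/
  Y : ℕ → Ω → ℝ
  /-- filtration: `F t` records everything realized through the end of round `t`
  (with `F 0` recording the initial draws ζ¹,…,ζᵐ) -/
  F : ℕ → MeasurableSpace Ω

namespace ESData

variable {Ω : Type} [MeasurableSpace Ω] {d m : ℕ} (A : ESData Ω d m)

/-- Design matrix `V_t = λ I + ∑_{s=1}^t X_s X_sᵀ`. -/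
def V (t : ℕ) (ω : Ω) : Matrix (Fin d) (Fin d) ℝ :=
  A.lam • (1 : Matrix (Fin d) (Fin d) ℝ) +
    ∑ s ∈ Finset.Icc 1 t, vecMulVec (A.act s ω) (A.act s ω)

/-- Perturbation accumulator `S_t^j = √λ ζ^j + ∑_{s=1}^t ξ_s^j X_s`. -/
def S (j : Fin m) (t : ℕ) (ω : Ω) : Fin d → ℝ :=
  Real.sqrt A.lam • A.zeta j ω + ∑ s ∈ Finset.Icc 1 t, A.xi s j ω • A.act s ω

/-- Ridge regression estimate `θ̂_t = V_t⁻¹ ∑_{s=1}^t Y_s X_s`. -/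
def thetaHat (t : ℕ) (ω : Ω) : Fin d → ℝ :=
  (A.V t ω)⁻¹ *ᵥ ∑ s ∈ Finset.Icc 1 t, A.Y s ω • A.act s ω

/-- Confidence radius `β_t^δ = √λ + √(2 log (1/δ) + log (det V_t / λ^d))`. -/
def beta (t : ℕ) (ω : Ω) : ℝ :=
  Real.sqrt A.lam +
    Real.sqrt (2 * Real.log (1 / A.del) + Real.log ((A.V t ω).det / A.lam ^ d))

/-- Ensemble model parameters `θ_t^j = θ̂_t + γ̄ β_t^δ V_t⁻¹ S_t^j`. -/
def theta (j : Fin m) (t : ℕ) (ω : Ω) : Fin d → ℝ :=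
  A.thetaHat t ω + (A.gam * A.beta t ω) • ((A.V t ω)⁻¹ *ᵥ A.S j t ω)

/-- Reward noise `η_t = Y_t − ⟨X_t, θ⋆⟩`. -/
def eta (t : ℕ) (ω : Ω) : ℝ := A.Y t ω - A.act t ω ⬝ᵥ A.thetaStar

/-- The σ-algebra of everything realized up to and including the choice of `X_t`:
the past through round `t-1` together with the fresh index `J_t` (which determines `X_t`). -/
def G (t : ℕ) : MeasurableSpace Ω :=
  A.F (t - 1) ⊔ MeasurableSpace.comap (A.J t) inferInstance

/-- `n`-step regret `R_n = max_{x⋆ ∈ X} ∑_{t=1}^n ⟨x⋆ − X_t, θ⋆⟩`. -/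
def regret (n : ℕ) (ω : Ω) : ℝ :=
  ⨆ x ∈ A.Xset, ∑ t ∈ Finset.Icc 1 n, (x - A.act t ω) ⬝ᵥ A.thetaStar

/-- Exceedance frequency `E_{t,m}(u,c) = m⁻¹ ∑_j 1{⟨u, S_{t−1}^j⟩ / ‖u‖_{V_{t−1}} ≥ c}`. -/
def exFreq (t : ℕ) (u : Fin d → ℝ) (c : ℝ) (ω : Ω) : ℝ :=
  (m : ℝ)⁻¹ * ∑ j : Fin m,
    if c ≤ (u ⬝ᵥ A.S j (t - 1) ω) / wnorm (A.V (t - 1) ω) u then 1 else 0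

/-- The term `γ_t^δ = √d + √(log(4m/δ)) + √(2 log(4m/δ) + d log(1 + t/(λd)))`,
for a confidence parameter `δ`. -/
def gammaConf (δ : ℝ) (t : ℕ) : ℝ :=
  Real.sqrt d + Real.sqrt (Real.log (4 * m / δ)) +
    Real.sqrt (2 * Real.log (4 * m / δ) + d * Real.log (1 + t / (A.lam * d)))

/-- The algorithmic part of linear ensemble sampling: the randomization used by the
algorithm has the prescribed distributions, all fresh draws are independent of the past,
and the actions are selected by maximizing the predicted reward of the sampled model. -/
structure IsESBase : Prop where
  prob : IsProbabilityMeasure A.P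
  lam_pos : 0 < A.lam
  gam_pos : 0 < A.gam
  del_mem : A.del ∈ Set.Ioo (0 : ℝ) 1
  -- filtration structure
  F_le : ∀ t, A.F t ≤ ‹MeasurableSpace Ω›
  F_mono : Monotone A.F
  zeta_meas : ∀ j, Measurable[A.F 0] (A.zeta j)
  xi_meas : ∀ t, 1 ≤ t → ∀ j, Measurable[A.F t] (A.xi t j)
  J_meas : ∀ t, 1 ≤ t → Measurable[A.F t] (A.J t)
  act_meas : ∀ t, 1 ≤ t → Measurable[A.F t] (A.act t)
  Y_meas : ∀ t, 1 ≤ t → Measurable[A.F t] (A.Y t)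
  -- laws of the algorithm's random draws
  xi_law : ∀ t, 1 ≤ t → ∀ j, Measure.map (A.xi t j) A.P = gaussianReal 0 1
  xi_indep : ∀ t, 1 ≤ t → iIndepFun (fun j => A.xi t j) A.P
  J_law : ∀ t, 1 ≤ t → ∀ j, A.P {ω | A.J t ω = j} = (m : ENNReal)⁻¹
  -- freshness: the draws `(ξ_t^1,…,ξ_t^m, J_t)` of round `t` are independent of the past
  fresh : ∀ t, 1 ≤ t →
    Indep (MeasurableSpace.comap (fun ω => ((fun j => A.xi t j ω), A.J t ω)) inferInstance)
      (A.F (t - 1)) A.P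
  -- the fresh index `J_t` is independent of the fresh perturbations `(ξ_t^j)_j`
  xiJ_indep : ∀ t, 1 ≤ t → IndepFun (fun ω (j : Fin m) => A.xi t j ω) (A.J t) A.P
  -- the action `X_t` is determined by the past and `J_t`, and maximizes `⟨x, θ_{t−1}^{J_t}⟩`
  act_adapted : ∀ t, 1 ≤ t → Measurable[A.G t] (A.act t)
  act_mem : ∀ t, 1 ≤ t → ∀ ω, A.act t ω ∈ A.Xset
  act_argmax : ∀ t, 1 ≤ t → ∀ ω, ∀ x ∈ A.Xset,
    x ⬝ᵥ A.theta (A.J t ω) (t - 1) ω ≤ A.act t ω ⬝ᵥ A.theta (A.J t ω) (t - 1) ω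

/-- A full run of linear ensemble sampling with prior distribution `P₀` for the `ζ^j`,
against a stochastic linear bandit environment: the action set is a closed subset of the
unit ball, `θ⋆` lies in the unit ball, and the reward noise is conditionally 1-subgaussian
given the past (including the action of the current round). -/
structure IsES (P₀ : Measure (Fin d → ℝ)) extends IsESBase A : Prop where
  closedX : IsClosed A.Xset
  ballX : ∀ x ∈ A.Xset, euclNorm x ≤ 1
  ballTheta : euclNorm A.thetaStar ≤ 1
  zeta_law : ∀ j, Measure.map (A.zeta j) A.P = P₀
  zeta_indep : iIndepFun A.zeta A.P
  noise_subg : ∀ t, 1 ≤ t → ∀ s : ℝ,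
    (A.P[fun ω => Real.exp (s * A.eta t ω)|A.G t]) ≤ᵐ[A.P] fun _ => Real.exp (s ^ 2 / 2)

/-- Linear ensemble sampling with standard Gaussian prior. -/
def IsGaussianES : Prop := A.IsES (stdGaussianVec d)

/-- The tie-breaking rule on the unit ball: play `θ_t/‖θ_t‖` if `θ_t ≠ 0`, else play `0`. -/
def TieBreak : Prop :=
  ∀ t, 1 ≤ t → ∀ ω,
    (A.theta (A.J t ω) (t - 1) ω = 0 → A.act t ω = 0) ∧
    (A.theta (A.J t ω) (t - 1) ω ≠ 0 →
      A.act t ω = (euclNorm (A.theta (A.J t ω) (t - 1) ω))⁻¹ • A.theta (A.J t ω) (t - 1) ω)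

end ESData

/-!
Every quantity the algorithm computes is built from `ζ¹,…,ζᵐ` and past actions by linear
operations and by `V⁻¹`, where `V` is `λ I` plus outer products of past actions. If the past
actions lie in `U`, then `V` maps `U` into `U`, hence so does `V⁻¹` (injective endomorphisms
of the finite-dimensional `U` are onto), and therefore every `θ^j` lies in `U`; the
tie-breaking rule makes the next action a multiple of some `θ^j`. Induction on `t` finishes
the argument, which holds for every outcome `ω`.
-/

theorem Matrix.inv_mulVec_mem {K n : Type*} [Field K] [Fintype n] [DecidableEq n]
    {M : Matrix n n K} {U : Submodule K (n → K)} (hU : ∀ u ∈ U, M *ᵥ u ∈ U)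
    {u : n → K} (hu : u ∈ U) : M⁻¹ *ᵥ u ∈ U := by
  by_cases hM : IsUnit M.det
  swap
  · -- a singular matrix has `M⁻¹ = 0` by convention
    simp [Matrix.nonsing_inv_apply_not_isUnit M hM]
  let f : U →ₗ[K] U := M.mulVecLin.restrict hU
  have hf : Function.Injective f := fun a b hab =>
    Subtype.ext <| mulVec_injective_iff_isUnit.mpr ((isUnit_iff_isUnit_det M).mpr hM)
      (congrArg Subtype.val hab)
  obtain ⟨w, hw⟩ := LinearMap.injective_iff_surjective.mp hf ⟨u, hu⟩
  have hwu : M *ᵥ (w : n → K) = u := congrArg Subtype.val hw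
  rw [← hwu, mulVec_mulVec, nonsing_inv_mul M hM, one_mulVec]
  exact w.2

namespace ESData

variable {Ω : Type} [MeasurableSpace Ω] {d m : ℕ} (A : ESData Ω d m)
  {U : Submodule ℝ (Fin d → ℝ)} {t : ℕ} {ω : Ω}

theorem V_mulVec_mem (hact : ∀ s ∈ Finset.Icc 1 t, A.act s ω ∈ U) {u : Fin d → ℝ}
    (hu : u ∈ U) : A.V t ω *ᵥ u ∈ U := by
  rw [V, add_mulVec, sum_mulVec, smul_mulVec, one_mulVec]
  refine U.add_mem (U.smul_mem _ hu) (U.sum_mem fun s hs => ?_)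
  rw [vecMulVec_mulVec, op_smul_eq_smul]
  exact U.smul_mem _ (hact s hs)

theorem thetaHat_mem (hact : ∀ s ∈ Finset.Icc 1 t, A.act s ω ∈ U) : A.thetaHat t ω ∈ U :=
  inv_mulVec_mem (fun _ => A.V_mulVec_mem hact)
    (U.sum_mem fun s hs => U.smul_mem _ (hact s hs))

theorem S_mem (hact : ∀ s ∈ Finset.Icc 1 t, A.act s ω ∈ U) (j : Fin m)
    (hzeta : A.zeta j ω ∈ U) : A.S j t ω ∈ U :=
  U.add_mem (U.smul_mem _ hzeta) (U.sum_mem fun s hs => U.smul_mem _ (hact s hs))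

theorem theta_mem (hact : ∀ s ∈ Finset.Icc 1 t, A.act s ω ∈ U) (j : Fin m)
    (hzeta : A.zeta j ω ∈ U) : A.theta j t ω ∈ U :=
  U.add_mem (A.thetaHat_mem hact)
    (U.smul_mem _ (inv_mulVec_mem (fun _ => A.V_mulVec_mem hact) (A.S_mem hact j hzeta)))

theorem act_mem_span_zeta (htie : A.TieBreak) (ht : 1 ≤ t) :
    A.act t ω ∈ Submodule.span ℝ (Set.range fun j => A.zeta j ω) := by
  induction t using Nat.strong_induction_on with
  | _ t ih =>
    have hθ :
        A.theta (A.J t ω) (t - 1) ω ∈ Submodule.span ℝ (Set.range fun j => A.zeta j ω) :=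
      A.theta_mem (fun s hs => ih s (by grind) (Finset.mem_Icc.mp hs).1)
        (A.J t ω) (Submodule.subset_span ⟨A.J t ω, rfl⟩)
    obtain ⟨hzero, hne⟩ := htie t ht ω
    by_cases hθ0 : A.theta (A.J t ω) (t - 1) ω = 0
    · simp [hzero hθ0]
    · rw [hne hθ0]
      exact Submodule.smul_mem _ _ hθ

end ESData

/-- **Ensemble sampling actions stay in the span of the initialisation.**
Run linear ensemble sampling on the action set `X = B^d` with any initial vectors
`ζ¹,…,ζᵐ ∈ ℝ^d`, arbitrary rewards, and any parameters `γ̄, λ > 0`, using the tie-breaking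
rule `X_t = θ_t/‖θ_t‖` if `θ_t ≠ 0` and `X_t = 0` if `θ_t = 0`. Let
`U = span{ζ¹,…,ζᵐ}`. Then for every `t ≥ 1`, `X_t ∈ U` almost surely. -/
theorem es_actions_in_span
    (Ω : Type) (_ : MeasurableSpace Ω) (d m : ℕ) (A : ESData Ω d m)
    (htie : A.TieBreak) :
    ∀ t : ℕ, 1 ≤ t →
      ∀ᵐ ω ∂A.P,
        A.act t ω ∈ Submodule.span ℝ (Set.range fun j : Fin m => A.zeta j ω) :=
  fun _ ht => ae_of_all _ fun _ => A.act_mem_span_zeta htie ht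
end
end

section
/- Let U ⊆ ℝ^d be a deterministic linear subspace with dim(U) = k ≤ d/2, and let V be a random vector distributed uniformly on the Euclidean unit sphere S^{d−1} of ℝ^d. Let Π_U denote the orthogonal projection onto U. Then P( ‖Π_U V‖² ≤ 1/2 ) ≥ 1/2. -/
/-!
Since `dim U ≤ d / 2 ≤ dim Uᗮ`, some isometry `O` of `ℝ^d` maps `U` into `Uᗮ`. For a unit vector
`v`, the projections onto the orthogonal subspaces `U` and `O U` have squared norms summing to at
most `1`, so `‖Π_U v‖² ≤ 1/2` or `‖Π_U (O⁻¹ v)‖² = ‖Π_{O U} v‖² ≤ 1/2`. The two events have the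
same probability by rotation invariance and together they are almost sure, so each has
probability at least `1/2`.
-/

open MeasureTheory Module

noncomputable section

section InnerProductSpace

variable {𝕜 E F : Type*} [RCLike 𝕜] [NormedAddCommGroup E] [InnerProductSpace 𝕜 E]
  [NormedAddCommGroup F] [InnerProductSpace 𝕜 F]

theorem LinearIsometry.nonempty_of_finrank_le [FiniteDimensional 𝕜 E] [FiniteDimensional 𝕜 F]
    (h : finrank 𝕜 E ≤ finrank 𝕜 F) : Nonempty (E →ₗᵢ[𝕜] F) := by
  let bE := stdOrthonormalBasis 𝕜 E
  let bF := stdOrthonormalBasis 𝕜 F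
  let f : E →ₗ[𝕜] F := bE.toBasis.constr 𝕜 (bF ∘ Fin.castLE h)
  have hf : Orthonormal 𝕜 (f ∘ bE.toBasis) := by
    convert bF.orthonormal.comp _ (Fin.castLE_injective h) using 1
    ext i
    simp [f]
  exact ⟨f.isometryOfOrthonormal (by simp [bE.orthonormal]) hf⟩

theorem Submodule.exists_linearIsometryEquiv_isOrtho_map [FiniteDimensional 𝕜 E]
    (U : Submodule 𝕜 E) (h : finrank 𝕜 U ≤ finrank 𝕜 Uᗮ) :
    ∃ O : E ≃ₗᵢ[𝕜] E, U ⟂ U.map (O.toLinearEquiv : E →ₗ[𝕜] E) := by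
  obtain ⟨ℓ⟩ := LinearIsometry.nonempty_of_finrank_le h
  let O := (Uᗮ.subtypeₗᵢ.comp ℓ).extend.toLinearIsometryEquiv rfl
  refine ⟨O, (Submodule.isOrtho_iff_le.mpr ?_).symm⟩
  rintro _ ⟨u, hu, rfl⟩
  have hOu : O u = ℓ ⟨u, hu⟩ := LinearIsometry.extend_apply _ ⟨u, hu⟩
  exact hOu ▸ (ℓ ⟨u, hu⟩).2

theorem Submodule.norm_sq_starProjection_add_norm_sq_starProjection_le {U W : Submodule 𝕜 E}
    [U.HasOrthogonalProjection] [W.HasOrthogonalProjection] (hUW : U ⟂ W) (x : E) :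
    ‖U.starProjection x‖ ^ 2 + ‖W.starProjection x‖ ^ 2 ≤ ‖x‖ ^ 2 := by
  have hW : ‖W.starProjection x‖ ≤ ‖Uᗮ.starProjection x‖ := by
    have hWU : W.starProjection (Uᗮ.starProjection x) = W.starProjection x := by
      rw [W.starProjection_apply, Submodule.orthogonalProjectionOnto_starProjection_of_le
        (Submodule.isOrtho_iff_le.mp hUW.symm), ← W.starProjection_apply]
    rw [← hWU]
    exact W.norm_starProjection_apply_le _
  rw [Submodule.norm_sq_eq_add_norm_sq_starProjection x U]
  gcongr

end InnerProductSpace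

theorem half_le_measure_preimage_of_ae_mem_or_map_mem {Ω α : Type*} [MeasurableSpace Ω]
    [MeasurableSpace α] {P : Measure Ω} [IsProbabilityMeasure P] {V : Ω → α} {g : α → α}
    {S : Set α} (hV : AEMeasurable V P) (hg : Measurable g) (hS : MeasurableSet S)
    (hinv : P.map (g ∘ V) = P.map V) (hcover : ∀ᵐ ω ∂P, V ω ∈ S ∨ g (V ω) ∈ S) :
    1 / 2 ≤ P (V ⁻¹' S) := by
  have hgS : P ((g ∘ V) ⁻¹' S) = P (V ⁻¹' S) := by
    rw [← Measure.map_apply_of_aemeasurable (hg.comp_aemeasurable hV) hS, hinv,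
      Measure.map_apply_of_aemeasurable hV hS]
  have hsum : 1 ≤ P (V ⁻¹' S) * 2 :=
    calc 1 = P Set.univ := measure_univ.symm
      _ ≤ P (V ⁻¹' S ∪ (g ∘ V) ⁻¹' S) := measure_mono_ae (hcover.mono fun _ h _ => h)
      _ ≤ P (V ⁻¹' S) + P ((g ∘ V) ⁻¹' S) := measure_union_le _ _
      _ = P (V ⁻¹' S) * 2 := by rw [hgS, mul_two]
  exact ENNReal.div_le_of_le_mul hsum

/-- Let `U ⊆ ℝ^d` be a deterministic linear subspace with `dim U = k ≤ d/2`, and let `V` be a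
random vector distributed uniformly on the Euclidean unit sphere `S^{d−1}` (i.e. its law is a
probability measure concentrated on the sphere and invariant under every linear isometry).
Then `P(‖Π_U V‖² ≤ 1/2) ≥ 1/2`, where `Π_U` is the orthogonal projection onto `U`. -/
theorem proj_of_uniform_sphere_small
    (d k : ℕ) (Ω : Type) (_ : MeasurableSpace Ω) (P : Measure Ω)
    (hP : IsProbabilityMeasure P)
    (U : Submodule ℝ (EuclideanSpace ℝ (Fin d)))
    (hdim : Module.finrank ℝ U = k) (hk : 2 * k ≤ d)
    (V : Ω → EuclideanSpace ℝ (Fin d)) (hVmeas : Measurable V)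
    (hsphere : ∀ᵐ ω ∂P, ‖V ω‖ = 1)
    (hrotinv : ∀ O : EuclideanSpace ℝ (Fin d) ≃ₗᵢ[ℝ] EuclideanSpace ℝ (Fin d),
      Measure.map (fun ω => O (V ω)) P = Measure.map V P) :
    (1 / 2 : ENNReal) ≤
      P {ω | ‖(U.orthogonalProjectionOnto (V ω) : EuclideanSpace ℝ (Fin d))‖ ^ 2 ≤ 1 / 2} := by
  have hU : finrank ℝ U ≤ finrank ℝ Uᗮ := by
    have := U.finrank_add_finrank_orthogonal
    rw [finrank_euclideanSpace_fin] at this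
    omega
  obtain ⟨O, hO⟩ := U.exists_linearIsometryEquiv_isOrtho_map hU
  refine half_le_measure_preimage_of_ae_mem_or_map_mem (g := O.symm)
    (S := {v | ‖(U.orthogonalProjectionOnto v : EuclideanSpace ℝ (Fin d))‖ ^ 2 ≤ 1 / 2})
    hVmeas.aemeasurable O.symm.continuous.measurable
    (measurableSet_le (by fun_prop) measurable_const) (hrotinv O.symm) ?_
  filter_upwards [hsphere] with ω hω
  have hsum := Submodule.norm_sq_starProjection_add_norm_sq_starProjection_le hO (V ω)
  rw [Submodule.starProjection_map_apply, LinearIsometryEquiv.norm_map, hω] at hsum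
  simp only [← Submodule.starProjection_apply]
  by_contra! h
  linarith [h.1, h.2]
end
end

section
/- Let U be a random linear subspace of ℝ^d (a measurable assignment ω ↦ U(ω), e.g. given by a measurable family of orthogonal projection matrices Π_{U(ω)}) satisfying dim(U) ≤ d/2 almost surely. Then there exists a deterministic θ⋆ on the Euclidean unit sphere S^{d−1} such that P( ‖Π_U θ⋆‖² ≤ 1/2 ) ≥ 1/2, where Π_U denotes the orthogonal projection onto U. -/
open MeasureTheory ProbabilityTheory Matrix

noncomputable section

/-! Average over directions `θ` drawn uniformly from the unit ball. If `K` is a subspace with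
`2 dim K ≤ d`, some rotation `L` carries `K` into `Kᗮ`; then `‖Π_K (L⁻¹ x)‖² + ‖Π_K x‖² ≤ ‖x‖²`,
so `L⁻¹` maps the directions with `‖Π_K x‖² > ‖x‖² / 2` into those with `‖Π_K x‖² ≤ ‖x‖² / 2`,
and the latter fill at least half of the ball. By Fubini, some direction in the ball is good
with probability at least `1/2`; normalise it. -/

open Module Metric Set

namespace Submodule

variable {𝕜 E : Type*} [RCLike 𝕜] [NormedAddCommGroup E] [InnerProductSpace 𝕜 E]

theorem IsOrtho.norm_sq_starProjection_add_le {K K' : Submodule 𝕜 E} [K.HasOrthogonalProjection]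
    [K'.HasOrthogonalProjection] (h : K ⟂ K') (x : E) :
    ‖K.starProjection x‖ ^ 2 + ‖K'.starProjection x‖ ^ 2 ≤ ‖x‖ ^ 2 := by
  have hK' : ‖K'.starProjection x‖ ≤ ‖Kᗮ.starProjection x‖ := by
    rw [← starProjection_comp_starProjection_of_le h.symm]
    exact norm_starProjection_apply_le _ _
  rw [norm_sq_eq_add_norm_sq_starProjection x K]
  gcongr

variable [FiniteDimensional 𝕜 E]

theorem exists_linearIsometryEquiv_map_le_orthogonal (K : Submodule 𝕜 E)
    (hK : 2 * finrank 𝕜 K ≤ finrank 𝕜 E) :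
    ∃ L : E ≃ₗᵢ[𝕜] E, K.map (L.toLinearEquiv : E →ₗ[𝕜] E) ≤ Kᗮ := by
  have hle : finrank 𝕜 K ≤ finrank 𝕜 Kᗮ := by
    have := K.finrank_add_finrank_orthogonal
    omega
  let b := stdOrthonormalBasis 𝕜 K
  let b' := stdOrthonormalBasis 𝕜 Kᗮ
  -- send an orthonormal basis of `K` onto part of one of `Kᗮ`, then extend to all of `E`
  let f : K →ₗ[𝕜] E := Kᗮ.subtype ∘ₗ b.toBasis.constr 𝕜 fun i => b' (Fin.castLE hle i)
  have hf : Orthonormal 𝕜 (f ∘ b.toBasis) := by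
    have hfb : f ∘ b.toBasis = Kᗮ.subtypeₗᵢ ∘ b' ∘ Fin.castLE hle := by
      ext i
      simp [f]
    rw [hfb]
    exact (b'.orthonormal.comp _ (Fin.castLE_injective hle)).comp_linearIsometry Kᗮ.subtypeₗᵢ
  let L := (f.isometryOfOrthonormal b.orthonormal hf).extend.toLinearIsometryEquiv rfl
  refine ⟨L, ?_⟩
  rintro _ ⟨x, hx, rfl⟩
  have : L x = f ⟨x, hx⟩ := LinearIsometry.extend_apply _ ⟨x, hx⟩
  simp only [LinearEquiv.coe_coe, LinearIsometryEquiv.coe_toLinearEquiv, this]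
  exact Submodule.coe_mem _

theorem exists_linearIsometryEquiv_norm_sq_starProjection_add_le (K : Submodule 𝕜 E)
    (hK : 2 * finrank 𝕜 K ≤ finrank 𝕜 E) :
    ∃ L : E ≃ₗᵢ[𝕜] E, ∀ x, ‖K.starProjection (L x)‖ ^ 2 + ‖K.starProjection x‖ ^ 2 ≤ ‖x‖ ^ 2 := by
  obtain ⟨L, hL⟩ := K.exists_linearIsometryEquiv_map_le_orthogonal hK
  refine ⟨L.symm, fun x => ?_⟩
  rw [← L.norm_map, ← starProjection_map_apply]
  exact IsOrtho.norm_sq_starProjection_add_le hL x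

end Submodule

namespace MeasureTheory

theorem MeasurePreserving.measure_univ_le_two_mul {α : Type*} [MeasurableSpace α] {μ : Measure α}
    {f : α → α} (hf : MeasurePreserving f μ μ) {s : Set α} (hs : MeasurableSet s)
    (h : sᶜ ⊆ f ⁻¹' s) : μ univ ≤ 2 * μ s :=
  calc μ univ = μ s + μ sᶜ := (measure_add_measure_compl hs).symm
    _ ≤ μ s + μ (f ⁻¹' s) := by gcongr
    _ = 2 * μ s := by rw [hf.measure_preimage hs.nullMeasurableSet, two_mul]

theorem frequently_le_measure_prodMk_preimage {Ω X : Type*} [MeasurableSpace Ω]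
    [MeasurableSpace X] {P : Measure Ω} [IsProbabilityMeasure P] {ν : Measure X}
    [IsFiniteMeasure ν] [NeZero ν] {s : Set (Ω × X)} (hs : MeasurableSet s) {c : ENNReal}
    (h : ∀ᵐ ω ∂P, c * ν univ ≤ ν (Prod.mk ω ⁻¹' s)) :
    ∃ᵐ x ∂ν, c ≤ P ((·, x) ⁻¹' s) := by
  by_contra hcon
  have hlt : ∀ᵐ x ∂ν, P ((·, x) ⁻¹' s) < c := by
    simpa only [Filter.not_frequently, not_le] using hcon
  have hfin : ∫⁻ x, P ((·, x) ⁻¹' s) ∂ν ≠ ⊤ :=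
    ne_top_of_le_ne_top (measure_ne_top ν univ)
      ((lintegral_mono fun _ => prob_le_one).trans_eq (by simp))
  have := calc c * ν univ
      = ∫⁻ _, c * ν univ ∂P := by simp
    _ ≤ ∫⁻ ω, ν (Prod.mk ω ⁻¹' s) ∂P := lintegral_mono_ae h
    _ = ∫⁻ x, P ((·, x) ⁻¹' s) ∂ν := by
      rw [← Measure.prod_apply hs, Measure.prod_apply_symm hs]
    _ < ∫⁻ _, c ∂ν := lintegral_strict_mono (NeZero.ne ν) aemeasurable_const hfin hlt
    _ = c * ν univ := lintegral_const c
  exact this.false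

end MeasureTheory

section Rotation

variable {E : Type*} [NormedAddCommGroup E] [InnerProductSpace ℝ E] [FiniteDimensional ℝ E]
  [MeasurableSpace E] [BorelSpace E]

theorem LinearIsometryEquiv.measurePreserving_restrict_ball (L : E ≃ₗᵢ[ℝ] E) (r : ℝ) :
    MeasurePreserving L (volume.restrict (ball 0 r)) (volume.restrict (ball 0 r)) := by
  have h := L.measurePreserving.restrict_preimage (measurableSet_ball (x := 0) (ε := r))
  rwa [L.preimage_ball, L.symm.map_zero] at h

theorem Submodule.measure_univ_le_two_mul_measure_norm_sq_starProjection_le (K : Submodule ℝ E)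
    (hK : 2 * finrank ℝ K ≤ finrank ℝ E) {μ : Measure E}
    (hμ : ∀ L : E ≃ₗᵢ[ℝ] E, MeasurePreserving L μ μ) :
    μ univ ≤ 2 * μ {x | 2 * ‖K.starProjection x‖ ^ 2 ≤ ‖x‖ ^ 2} := by
  obtain ⟨L, hL⟩ := K.exists_linearIsometryEquiv_norm_sq_starProjection_add_le hK
  refine (hμ L).measure_univ_le_two_mul (measurableSet_le (by fun_prop) (by fun_prop)) ?_
  intro x hx
  simp only [mem_compl_iff, mem_ofPred_eq, not_le, mem_preimage, L.norm_map] at hx ⊢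
  linarith [hL x]

end Rotation

theorem LinearMap.norm_sq_apply_inv_norm_smul_le {E F : Type*} [NormedAddCommGroup E]
    [NormedSpace ℝ E] [SeminormedAddCommGroup F] [NormedSpace ℝ F] (T : E →ₗ[ℝ] F) {x : E}
    (hx : x ≠ 0) (h : 2 * ‖T x‖ ^ 2 ≤ ‖x‖ ^ 2) : ‖T (‖x‖⁻¹ • x)‖ ^ 2 ≤ 1 / 2 := by
  have hx2 : 0 < ‖x‖ ^ 2 := by positivity
  rw [map_smul, norm_smul, norm_inv, norm_norm, mul_pow, inv_pow, inv_mul_le_iff₀ hx2]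
  linarith

theorem euclNorm_ofLp {d : ℕ} (x : EuclideanSpace ℝ (Fin d)) :
    euclNorm (WithLp.ofLp x) = ‖x‖ := by
  rw [euclNorm, EuclideanSpace.norm_eq]
  simp [dotProduct, sq]

namespace Matrix

variable {n : Type*} [Fintype n] [DecidableEq n] {M : Matrix n n ℝ}

theorem isSymmetricProjection_toEuclideanLin (hsym : Mᵀ = M) (hidem : M * M = M) :
    (toEuclideanLin M).IsSymmetricProjection := by
  have hM : IsStarProjection M :=
    ⟨hidem, by simpa [IsSelfAdjoint, star_eq_conjTranspose] using hsym⟩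
  exact ContinuousLinearMap.isStarProjection_iff_isSymmetricProjection.mp
    (hM.map (toEuclideanCLM (n := n) (𝕜 := ℝ)))

theorem finrank_range_toEuclideanLin (M : Matrix n n ℝ) :
    finrank ℝ (LinearMap.range (toEuclideanLin (𝕜 := ℝ) M)) = M.rank := by
  rw [toEuclideanLin_eq_toLin_orthonormal,
    rank_eq_finrank_range_toLin M (EuclideanSpace.basisFun n ℝ).toBasis
      (EuclideanSpace.basisFun n ℝ).toBasis]

theorem exists_toEuclideanLin_eq_starProjection (hsym : Mᵀ = M) (hidem : M * M = M) :
    ∃ K : Submodule ℝ (EuclideanSpace ℝ n), finrank ℝ K = M.rank ∧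
      ∀ x, toEuclideanLin M x = K.starProjection x := by
  obtain ⟨_, h⟩ := LinearMap.isSymmetricProjection_iff_eq_coe_starProjection_range.mp
    (isSymmetricProjection_toEuclideanLin hsym hidem)
  exact ⟨_, finrank_range_toEuclideanLin M, fun x => congr($h x)⟩

theorem measure_univ_le_two_mul_measure_norm_sq_toEuclideanLin_le (hsym : Mᵀ = M)
    (hidem : M * M = M) (hrank : 2 * M.rank ≤ Fintype.card n) {μ : Measure (EuclideanSpace ℝ n)}
    (hμ : ∀ L : EuclideanSpace ℝ n ≃ₗᵢ[ℝ] EuclideanSpace ℝ n, MeasurePreserving L μ μ) :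
    μ univ ≤ 2 * μ {x | 2 * ‖toEuclideanLin M x‖ ^ 2 ≤ ‖x‖ ^ 2} := by
  obtain ⟨K, hK, hM⟩ := exists_toEuclideanLin_eq_starProjection hsym hidem
  simp_rw [hM]
  exact K.measure_univ_le_two_mul_measure_norm_sq_starProjection_le
    (by simpa [hK] using hrank) hμ

end Matrix

theorem measurable_toEuclideanLin_apply {Ω n : Type*} [MeasurableSpace Ω] [Fintype n]
    [DecidableEq n] {A : Ω → Matrix n n ℝ} (hA : ∀ i j, Measurable fun ω => A ω i j) :
    Measurable fun p : Ω × EuclideanSpace ℝ n => toEuclideanLin (A p.1) p.2 := by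
  refine (MeasurableEquiv.toLp 2 (n → ℝ)).measurable.comp (measurable_pi_lambda _ fun i => ?_)
  refine Finset.measurable_sum _ fun j _ => ((hA i j).comp measurable_fst).mul ?_
  exact (measurable_pi_apply j).comp
    ((MeasurableEquiv.toLp 2 (n → ℝ)).symm.measurable.comp measurable_snd)

/-- Let `U` be a random linear subspace of `ℝ^d`, given by a measurable family of orthogonal
projection matrices `ω ↦ Π(ω)` (symmetric idempotent matrices), satisfying
`dim U = rank Π ≤ d/2` almost surely. Then there exists a deterministic `θ⋆` on the Euclidean
unit sphere such that `P(‖Π_U θ⋆‖² ≤ 1/2) ≥ 1/2`. -/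
theorem random_subspace_bad_direction
    (d : ℕ) (hd : 0 < d)
    (Ω : Type) (_ : MeasurableSpace Ω) (P : Measure Ω) (hP : IsProbabilityMeasure P)
    (Pi : Ω → Matrix (Fin d) (Fin d) ℝ) (hmeas : ∀ i j, Measurable fun ω => Pi ω i j)
    (hproj : ∀ᵐ ω ∂P, (Pi ω)ᵀ = Pi ω ∧ Pi ω * Pi ω = Pi ω)
    (hrank : ∀ᵐ ω ∂P, 2 * (Pi ω).rank ≤ d) :
    ∃ θ : Fin d → ℝ, euclNorm θ = 1 ∧
      (1 / 2 : ENNReal) ≤ P {ω | euclNorm (Pi ω *ᵥ θ) ^ 2 ≤ 1 / 2} := by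
  have : Nonempty (Fin d) := ⟨⟨0, hd⟩⟩
  let ν := volume.restrict (ball (0 : EuclideanSpace ℝ (Fin d)) 1)
  have : IsFiniteMeasure ν := isFiniteMeasure_restrict.mpr measure_ball_lt_top.ne
  have : NeZero ν := ⟨by simpa [ν, Measure.restrict_eq_zero] using
    (measure_ball_pos volume (0 : EuclideanSpace ℝ (Fin d)) one_pos).ne'⟩
  let s := {p : Ω × EuclideanSpace ℝ (Fin d) | 2 * ‖toEuclideanLin (Pi p.1) p.2‖ ^ 2 ≤ ‖p.2‖ ^ 2}
  have hs : MeasurableSet s :=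
    measurableSet_le (((measurable_toEuclideanLin_apply hmeas).norm.pow_const 2).const_mul 2)
      (by fun_prop)
  have hhalf : ∀ᵐ ω ∂P, (1 / 2) * ν univ ≤ ν (Prod.mk ω ⁻¹' s) := by
    filter_upwards [hproj, hrank] with ω ⟨hsym, hidem⟩ hr
    rw [one_div, ENNReal.inv_mul_le_iff two_ne_zero ENNReal.ofNat_ne_top]
    exact measure_univ_le_two_mul_measure_norm_sq_toEuclideanLin_le hsym hidem
      (by simpa using hr) fun L => L.measurePreserving_restrict_ball 1
  have hne : ∀ᵐ x ∂ν, x ≠ 0 := ae_restrict_of_ae (compl_mem_ae_iff.mpr (measure_singleton 0))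
  obtain ⟨x, hx, hx0⟩ :=
    ((frequently_le_measure_prodMk_preimage hs hhalf).and_eventually hne).exists
  refine ⟨WithLp.ofLp (‖x‖⁻¹ • x), ?_, hx.trans (measure_mono fun ω hω => ?_)⟩
  · rw [euclNorm_ofLp, norm_smul, norm_inv, norm_norm, inv_mul_cancel₀ (norm_ne_zero_iff.mpr hx0)]
  · change euclNorm (WithLp.ofLp (toEuclideanLin (Pi ω) (‖x‖⁻¹ • x))) ^ 2 ≤ 1 / 2
    rw [euclNorm_ofLp]
    exact LinearMap.norm_sq_apply_inv_norm_smul_le _ hx0 hω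

end
end
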